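/- arXiv:1204.0835 — 7 statements merged into one kernel-verified Lean document; each statement's English description precedes it below -/
import Mathlib

section
/- If F, G are functions on (0,1) related by the continuity condition (2-b)G(x) = √(1-x²)F'(x) - (1-b)·x/√(1-x²)·F(x), with F(0)=0, and ∫₀¹ G(x)/(1-x²)^{b/2} dx = 0, then lim_{x→1⁻} F(x)(1-x²)^{(1-b)/2} = 0. -/
/-!
With `H x = F x * (1 - x²)^((1-b)/2)`, the relation between `F` and `G` says exactly that
`H' = (2 - b) * G / (1 - x²)^(b/2)` on `(0, 1)`. As `H 0 = 0` and this derivative is integrable,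
`H x = (2 - b) * ∫₀ˣ G / (1 - t²)^(b/2)`, which tends to `(2 - b) * 0` as `x → 1⁻`.
-/

open Real MeasureTheory Set Filter Topology

theorem tendsto_nhdsLT_of_hasDerivAt_of_integrableOn {H h : ℝ → ℝ} {a b : ℝ} (hab : a < b)
    (hcont : ContinuousOn H (Ico a b)) (hderiv : ∀ t ∈ Ioo a b, HasDerivAt H (h t) t)
    (hint : IntegrableOn h (Ioo a b)) :
    Tendsto H (𝓝[<] b) (𝓝 (H a + ∫ t in Ioo a b, h t)) := by
  have hprim : ContinuousWithinAt (fun x => ∫ t in a..x, h t) (Icc a b) b :=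
    intervalIntegral.continuousWithinAt_primitive (measure_singleton b) <| by
      rwa [min_self, max_eq_right hab.le, intervalIntegrable_iff_integrableOn_Ioo_of_le hab.le]
  have hlim := (hprim.mono_of_mem_nhdsWithin (Icc_mem_nhdsLT hab)).tendsto.const_add (H a)
  rw [intervalIntegral.integral_of_le hab.le, integral_Ioc_eq_integral_Ioo] at hlim
  refine hlim.congr' ?_
  filter_upwards [Ioo_mem_nhdsLT hab] with x hx
  rw [intervalIntegral.integral_eq_sub_of_hasDeriv_right_of_le hx.1.le
    (hcont.mono (Icc_subset_Ico_right hx.2))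
    (fun t ht => (hderiv t ⟨ht.1, ht.2.trans hx.2⟩).hasDerivWithinAt)
    ((intervalIntegrable_iff_integrableOn_Ioo_of_le hx.1.le).2
      (hint.mono_set (Ioo_subset_Ioo_right hx.2.le)))]
  ring

theorem hasDerivAt_mul_one_sub_sq_rpow {F : ℝ → ℝ} {F' t : ℝ} (b : ℝ) (hF : HasDerivAt F F' t)
    (ht : t ^ 2 < 1) :
    HasDerivAt (fun x => F x * (1 - x ^ 2) ^ ((1 - b) / 2))
      ((√(1 - t ^ 2) * F' - (1 - b) * t / √(1 - t ^ 2) * F t) / (1 - t ^ 2) ^ (b / 2)) t := by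
  have hu : 0 < 1 - t ^ 2 := by linarith
  have hbase : HasDerivAt (fun x : ℝ => 1 - x ^ 2) (-(2 * t)) t := by
    simpa using (hasDerivAt_pow 2 t).const_sub 1
  refine (hF.mul (hbase.rpow_const (p := (1 - b) / 2) (Or.inl hu.ne'))).congr_deriv ?_
  have hw : (1 - t ^ 2) ^ (b / 2) ≠ 0 := (rpow_pos_of_pos hu _).ne'
  have e₁ : (1 - t ^ 2) ^ ((1 - b) / 2) * (1 - t ^ 2) ^ (b / 2) = √(1 - t ^ 2) := by
    rw [← rpow_add hu, sqrt_eq_rpow]; ring_nf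
  have e₂ : (1 - t ^ 2) ^ ((1 - b) / 2 - 1) * (1 - t ^ 2) ^ (b / 2) = (√(1 - t ^ 2))⁻¹ := by
    rw [← rpow_add hu, sqrt_eq_rpow, ← rpow_neg hu.le]; ring_nf
  rw [eq_div_iff hw]
  linear_combination F' * e₁ - (2 * t * ((1 - b) / 2) * F t) * e₂

theorem stmt_0_general (b : ℝ) (F G : ℝ → ℝ)
    (hF : ContDiffOn ℝ 1 F (Ico 0 1)) (hF0 : F 0 = 0)
    (hG : ∀ x ∈ Ioo (0:ℝ) 1,
      (2 - b) * G x = Real.sqrt (1 - x^2) * deriv F x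
        - (1 - b) * x / Real.sqrt (1 - x^2) * F x)
    (hInt : IntegrableOn (fun x => G x / (1 - x^2) ^ (b/2)) (Ioo 0 1))
    (hZero : ∫ x in Ioo (0:ℝ) 1, G x / (1 - x^2) ^ (b/2) = 0) :
    Tendsto (fun x => F x * (1 - x^2) ^ ((1-b)/2)) (nhdsWithin 1 (Iio 1)) (nhds 0) := by
  have hcont : ContinuousOn (fun x => F x * (1 - x ^ 2) ^ ((1 - b) / 2)) (Ico 0 1) :=
    hF.continuousOn.mul <| ContinuousOn.rpow_const (by fun_prop) fun t ht =>
      Or.inl (by nlinarith [ht.1, ht.2])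
  have hderiv : ∀ t ∈ Ioo (0:ℝ) 1, HasDerivAt (fun x => F x * (1 - x ^ 2) ^ ((1 - b) / 2))
      ((2 - b) * (G t / (1 - t ^ 2) ^ (b / 2))) t := fun t ht => by
    have hFt : HasDerivAt F (deriv F t) t :=
      ((hF.differentiableOn one_ne_zero t (Ioo_subset_Ico_self ht)).differentiableAt
        (Ico_mem_nhds ht.1 ht.2)).hasDerivAt
    rw [← mul_div_assoc, hG t ht]
    exact hasDerivAt_mul_one_sub_sq_rpow b hFt (by nlinarith [ht.1, ht.2])
  simpa [hF0, integral_const_mul, hZero] using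
    tendsto_nhdsLT_of_hasDerivAt_of_integrableOn one_pos hcont hderiv (hInt.const_mul (2 - b))

theorem stmt_0 (b : ℝ) (hb : 0 < b) (hb2 : b ≠ 2) (F G : ℝ → ℝ)
    (hF : ContDiffOn ℝ 1 F (Ico 0 1)) (hF0 : F 0 = 0)
    (hG : ∀ x ∈ Ioo (0:ℝ) 1,
      (2 - b) * G x = Real.sqrt (1 - x^2) * deriv F x
        - (1 - b) * x / Real.sqrt (1 - x^2) * F x)
    (hInt : IntegrableOn (fun x => G x / (1 - x^2) ^ (b/2)) (Ioo 0 1))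
    (hZero : ∫ x in Ioo (0:ℝ) 1, G x / (1 - x^2) ^ (b/2) = 0) :
    Tendsto (fun x => F x * (1 - x^2) ^ ((1-b)/2)) (nhdsWithin 1 (Iio 1)) (nhds 0) :=
  stmt_0_general b F G hF hF0 hG hInt hZero
end

section
/- Suppose G, Ω are continuous on (0,1), Ω(x) → C_ω ≠ 0 as x → 1⁻, G(x)Ω(x) = 0 on (0,1), and 2[(G²)'(x) + 4x/(1-x²)·G²(x)] + (Ω²)'(x) = 0 on (0,1). Then G ≡ 0 and Ω ≡ C_ω on (0,1). -/
/-!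
Wherever `Ω ≠ 0`, the relation `G Ω = 0` forces `G` to vanish on a neighbourhood, so the
equation reduces to `(Ω²)' = 2 Ω Ω' = 0`, i.e. `Ω' = 0`. Hence for `c ≠ 0` the level set
`{Ω = c}` is open in `(0,1)`; it is also closed there, so by connectedness `Ω` is constant as soon
as it is nonzero somewhere. The limit `Ω → C_ω ≠ 0` at `1⁻` supplies such a point and identifies
the constant, and then `G Ω = 0` gives `G = 0`.
-/

open Set Filter Topology

theorem IsPreconnected.eqOn_const_of_isOpen_inter_preimage {X Y : Type*} [TopologicalSpace X]
    [TopologicalSpace Y] [T1Space Y] {s : Set X} {f : X → Y} {c : Y} (hs : IsPreconnected s)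
    (hf : ContinuousOn f s) (hopen : IsOpen (s ∩ f ⁻¹' {c})) (hc : ∃ x ∈ s, f x = c) :
    EqOn f (fun _ => c) s := by
  obtain ⟨x₀, hx₀s, hx₀⟩ := hc
  have hclosed : closure (s ∩ f ⁻¹' {c}) ∩ s ⊆ s ∩ f ⁻¹' {c} := by
    rintro x ⟨hx_cl, hxs⟩
    have hfx : f x ∈ closure {c} :=
      ((hf x hxs).mono inter_subset_left).mem_closure hx_cl fun y hy => hy.2
    exact ⟨hxs, by rwa [closure_singleton] at hfx⟩
  exact fun x hx => (hs.subset_of_closure_inter_subset hopen ⟨x₀, hx₀s, hx₀s, hx₀⟩ hclosed hx).2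

theorem deriv_eq_zero_of_sq_balance {G Ω : ℝ → ℝ} {x k : ℝ} (hΩ : DifferentiableAt ℝ Ω x)
    (hΩx : Ω x ≠ 0) (hG : G =ᶠ[𝓝 x] 0)
    (h : 2 * (deriv (fun y => G y ^ 2) x + k * G x ^ 2) + deriv (fun y => Ω y ^ 2) x = 0) :
    deriv Ω x = 0 := by
  have hG_sq : (fun y => G y ^ 2) =ᶠ[𝓝 x] fun _ => 0 := hG.mono fun y hy => by simp [hy]
  have hΩ_sq : deriv (fun y => Ω y ^ 2) x = 2 * Ω x * deriv Ω x := by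
    rw [deriv_fun_pow hΩ 2]
    ring
  rw [hG_sq.deriv_eq, deriv_const, hG.eq_of_nhds, hΩ_sq] at h
  simpa [hΩx] using h

theorem stmt_3_general (G Ω : ℝ → ℝ) (Cω : ℝ) (hCω : Cω ≠ 0)
    (hΩ : ∀ x ∈ Ioo (0:ℝ) 1, DifferentiableAt ℝ Ω x)
    (hΩc : ContinuousOn Ω (Ioo 0 1))
    (hlim : Tendsto Ω (nhdsWithin 1 (Iio 1)) (nhds Cω))
    (h1 : ∀ x ∈ Ioo (0:ℝ) 1, G x * Ω x = 0)
    (h2 : ∀ x ∈ Ioo (0:ℝ) 1,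
      2 * (deriv (fun y => G y ^ 2) x + 4 * x / (1 - x^2) * G x ^ 2)
        + deriv (fun y => Ω y ^ 2) x = 0) :
    ∀ x ∈ Ioo (0:ℝ) 1, G x = 0 ∧ Ω x = Cω := by
  set N := Ioo (0:ℝ) 1 ∩ Ω ⁻¹' {0}ᶜ
  have hN : IsOpen N := hΩc.isOpen_inter_preimage isOpen_Ioo isOpen_compl_singleton
  have hG_N : ∀ x ∈ N, G x = 0 := fun x hx => (mul_eq_zero.1 (h1 x hx.1)).resolve_right hx.2
  have hderiv_N : EqOn (deriv Ω) 0 N := fun x hx =>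
    deriv_eq_zero_of_sq_balance (hΩ x hx.1) hx.2
      (eventually_of_mem (hN.mem_nhds hx) hG_N) (h2 x hx.1)
  obtain ⟨x₀, hΩx₀, hx₀⟩ := ((hlim.eventually_ne hCω).and (Ioo_mem_nhdsLT one_pos)).exists
  have hlevel : Ioo 0 1 ∩ Ω ⁻¹' {Ω x₀} = N ∩ Ω ⁻¹' {Ω x₀} := by
    ext x
    simp only [N, mem_inter_iff, mem_preimage, mem_singleton_iff, mem_compl_iff]
    grind
  have hconst : EqOn Ω (fun _ => Ω x₀) (Ioo 0 1) := by
    refine isPreconnected_Ioo.eqOn_const_of_isOpen_inter_preimage hΩc ?_ ⟨x₀, hx₀, rfl⟩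
    rw [hlevel]
    exact hN.isOpen_inter_preimage_of_deriv_eq_zero
      (fun x hx => (hΩ x hx.1).differentiableWithinAt) hderiv_N _
  have hΩx₀_eq : Ω x₀ = Cω :=
    tendsto_nhds_unique (tendsto_const_nhds.congr' <|
      eventually_of_mem (Ioo_mem_nhdsLT one_pos) fun x hx => (hconst hx).symm) hlim
  intro x hx
  have hΩx : Ω x = Cω := (hconst hx).trans hΩx₀_eq
  exact ⟨(mul_eq_zero.1 (h1 x hx)).resolve_right (hΩx ▸ hCω), hΩx⟩

theorem stmt_3 (G Ω : ℝ → ℝ) (Cω : ℝ) (hCω : Cω ≠ 0)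
    (hG : ∀ x ∈ Ioo (0:ℝ) 1, DifferentiableAt ℝ G x)
    (hΩ : ∀ x ∈ Ioo (0:ℝ) 1, DifferentiableAt ℝ Ω x)
    (hGc : ContinuousOn G (Ioo 0 1)) (hΩc : ContinuousOn Ω (Ioo 0 1))
    (hlim : Tendsto Ω (nhdsWithin 1 (Iio 1)) (nhds Cω))
    (h1 : ∀ x ∈ Ioo (0:ℝ) 1, G x * Ω x = 0)
    (h2 : ∀ x ∈ Ioo (0:ℝ) 1,
      2 * (deriv (fun y => G y ^ 2) x + 4 * x / (1 - x^2) * G x ^ 2)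
        + deriv (fun y => Ω y ^ 2) x = 0) :
    ∀ x ∈ Ioo (0:ℝ) 1, G x = 0 ∧ Ω x = Cω :=
  stmt_3_general G Ω Cω hCω hΩ hΩc hlim h1 h2
end

section
/- Let 0 < b < 1 and C ≠ 0, and let Ω(x) = C·x·(1-x²)^{(b-1)/2}·₂F₁((1-b)/2, b/2; 3/2; x²). Then Ω(x) → ±∞ as x → 1⁻ (the limit is infinite in absolute value); in particular Ω cannot have a finite nonzero limit at 1. -/
/-!
Every term of the hypergeometric series with positive parameters is nonnegative at `0 ≤ y < 1`
and the constant term is `1`, so `₂F₁ ≥ 1` there. Hence for `x` near `1⁻` the modulus is at least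
`|C|/2 · (1 - x²)^((b-1)/2)`, which blows up because the exponent is negative.
-/

open Real Set Filter Topology

/-- The Gaussian hypergeometric function ₂F₁(a,b;c;x) as a power series. -/
noncomputable def twoF1 (a b c x : ℝ) : ℝ :=
  ∑' n : ℕ, ((ascPochhammer ℝ n).eval a * (ascPochhammer ℝ n).eval b)
    / ((ascPochhammer ℝ n).eval c * (n.factorial : ℝ)) * x ^ n

theorem twoF1_eq_ordinaryHypergeometric (a b c x : ℝ) : twoF1 a b c x = ₂F₁ a b c x := by
  rw [twoF1, ordinaryHypergeometric, ordinaryHypergeometric_sum_eq]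
  refine tsum_congr fun n => ?_
  rw [smul_eq_mul]
  ring

theorem one_le_ordinaryHypergeometric {a b c x : ℝ} (ha : 0 < a) (hb : 0 < b) (hc : 0 < c)
    (hx0 : 0 ≤ x) (hx1 : x < 1) : 1 ≤ ₂F₁ a b c x := by
  set p := ordinaryHypergeometricSeries ℝ a b c
  have hradius : p.radius = 1 := ordinaryHypergeometricSeries_radius_eq_one ℝ a b c fun k =>
    have hk : (0 : ℝ) ≤ k := k.cast_nonneg
    ⟨by linarith, by linarith, by linarith⟩
  have hsum : Summable fun n => p n fun _ => x := p.summable <| by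
    rw [Metric.mem_eball, edist_zero_right, hradius, Real.enorm_eq_ofReal hx0]
    exact ENNReal.ofReal_lt_one.2 hx1
  have hterm (n : ℕ) : 0 ≤ p n fun _ => x := by
    rw [ordinaryHypergeometricSeries_apply_eq, smul_eq_mul]
    have := ascPochhammer_pos n a ha
    have := ascPochhammer_pos n b hb
    have := ascPochhammer_pos n c hc
    positivity
  calc (1 : ℝ) = p 0 fun _ => x := by
        rw [ordinaryHypergeometricSeries_apply_eq]; simp
    _ ≤ ∑' n, p n fun _ => x := hsum.le_tsum 0 fun n _ => hterm n
    _ = ₂F₁ a b c x := rfl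

theorem tendsto_one_sub_sq_nhdsLT_one :
    Tendsto (fun x : ℝ => 1 - x ^ 2) (𝓝[<] 1) (𝓝[>] 0) := by
  refine tendsto_nhdsWithin_iff.2 ⟨?_, ?_⟩
  · have : Tendsto (fun x : ℝ => 1 - x ^ 2) (𝓝 1) (𝓝 (1 - 1 ^ 2)) :=
      ((continuous_const.sub (continuous_pow 2)).tendsto 1)
    simpa using this.mono_left nhdsWithin_le_nhds
  · filter_upwards [Ioo_mem_nhdsLT (show (-1 : ℝ) < 1 by norm_num)] with x ⟨hx0, hx1⟩
    simp only [mem_Ioi, sub_pos, sq_lt_one_iff_abs_lt_one, abs_lt]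
    exact ⟨hx0, hx1⟩

theorem tendsto_one_sub_sq_rpow_atTop {s : ℝ} (hs : s < 0) :
    Tendsto (fun x : ℝ => (1 - x ^ 2) ^ s) (𝓝[<] 1) atTop :=
  (tendsto_rpow_neg_nhdsGT_zero hs).comp tendsto_one_sub_sq_nhdsLT_one

theorem stmt_7 (b C : ℝ) (hb0 : 0 < b) (hb1 : b < 1) (hC : C ≠ 0) :
    Tendsto
      (fun x : ℝ => |C * x * (1 - x^2) ^ ((b-1)/2) * twoF1 ((1-b)/2) (b/2) (3/2) (x^2)|)
      (nhdsWithin 1 (Iio 1)) atTop := by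
  have hblow : Tendsto (fun x : ℝ => |C| / 2 * (1 - x ^ 2) ^ ((b - 1) / 2)) (𝓝[<] 1) atTop :=
    (tendsto_one_sub_sq_rpow_atTop (by linarith)).const_mul_atTop (by positivity)
  refine tendsto_atTop_mono' _ ?_ hblow
  filter_upwards [Ioo_mem_nhdsLT (show (1 / 2 : ℝ) < 1 by norm_num)] with x ⟨hx0, hx1⟩
  have hr : 0 < (1 - x ^ 2) ^ ((b - 1) / 2) := rpow_pos_of_pos (by nlinarith) _
  have hF : 1 ≤ twoF1 ((1-b)/2) (b/2) (3/2) (x^2) := by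
    rw [twoF1_eq_ordinaryHypergeometric]
    exact one_le_ordinaryHypergeometric (by linarith) (by linarith) (by norm_num) (by positivity)
      (by nlinarith)
  rw [abs_mul, abs_mul, abs_mul, abs_of_pos (by linarith : 0 < x), abs_of_pos hr,
    abs_of_pos (zero_lt_one.trans_le hF)]
  calc |C| / 2 * (1 - x ^ 2) ^ ((b - 1) / 2) ≤ |C| * x * (1 - x ^ 2) ^ ((b - 1) / 2) * 1 := by
        rw [mul_one]; gcongr; nlinarith [abs_nonneg C]
    _ ≤ _ := by gcongr
end

section
/- Let b > 1, b ≠ 3, 5, 7, ..., C ≠ 0, and Ω(x) = C·x·(1-x²)^{(b-1)/2}·₂F₁((1-b)/2, b/2; 3/2; x²). Then lim_{x→1⁻} Ω(x) = 0; hence the boundary condition lim_{x→1} Ω(x) = C_ω ≠ 0 cannot be satisfied. -/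
/-!
For `b > 1` the prefactor `(1 - x²)^((b-1)/2)` is continuous at `x = 1` with value `0`, so it
suffices that `₂F₁((1-b)/2, b/2; 3/2; x²)` stays bounded as `x → 1⁻`. Its parameters satisfy
`a + b = 1/2` and `c = 3/2`, so by AM-GM the ratio of consecutive coefficients is eventually at
most `(n + 1)/(n + 3)`: then `(n + 1)(n + 2)|cₙ|` is eventually nonincreasing, the coefficients are
`O(1/n²)`, and the series converges absolutely on `[-1, 1]` with sum bounded by `∑ |cₙ|`.
-/

open Real Set Filter

open Topology

theorem summable_abs_of_abs_succ_mul_le {u : ℕ → ℝ} (N : ℕ)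
    (h : ∀ n ≥ N, |u (n + 1)| * (n + 3) ≤ |u n| * (n + 1)) : Summable fun n => |u n| := by
  set v : ℕ → ℝ := fun n => (n + 1) * (n + 2) * |u n| with hv
  have hv_le : ∀ n ≥ N, v n ≤ v N := by
    intro n hn
    induction n, hn using Nat.le_induction with
    | base => rfl
    | succ n hn ih =>
      refine le_trans ?_ ih
      have := h n hn
      simp only [hv, Nat.cast_succ]
      nlinarith [abs_nonneg (u (n + 1))]
  refine .of_norm_bounded_eventually_nat
    ((summable_one_div_nat_pow.mpr one_lt_two).mul_left (v N)) ?_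
  filter_upwards [eventually_ge_atTop N, eventually_gt_atTop 0] with n hN hn
  have hn' : (0 : ℝ) < n := Nat.cast_pos.mpr hn
  rw [Real.norm_eq_abs, abs_abs, mul_one_div, le_div_iff₀ (by positivity)]
  calc |u n| * n ^ 2 ≤ v n := by simp only [hv]; nlinarith [abs_nonneg (u n)]
    _ ≤ v N := hv_le n hN

noncomputable def hypergeomCoeff (a b c : ℝ) (n : ℕ) : ℝ :=
  ((ascPochhammer ℝ n).eval a * (ascPochhammer ℝ n).eval b)
    / ((ascPochhammer ℝ n).eval c * (n.factorial : ℝ))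

theorem twoF1_eq_tsum (a b c x : ℝ) :
    twoF1 a b c x = ∑' n, hypergeomCoeff a b c n * x ^ n := rfl

theorem hypergeomCoeff_succ {a b c : ℝ} (hc : 0 < c) (n : ℕ) :
    hypergeomCoeff a b c (n + 1) =
      hypergeomCoeff a b c n * ((a + n) * (b + n) / ((c + n) * (n + 1))) := by
  have : 0 < (ascPochhammer ℝ n).eval c := ascPochhammer_pos n c hc
  have : 0 < c + n := by positivity
  simp only [hypergeomCoeff, ascPochhammer_succ_eval, Nat.factorial_succ]
  push_cast
  field_simp

theorem abs_hypergeomCoeff_succ_mul_le {a b : ℝ} (hab : a + b = 1 / 2) {n : ℕ}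
    (ha : 0 ≤ a + n) (hb : 0 ≤ b + n) :
    |hypergeomCoeff a b (3 / 2) (n + 1)| * (n + 3) ≤ |hypergeomCoeff a b (3 / 2) n| * (n + 1) := by
  have hamgm : (a + n) * (b + n) ≤ (n + 1 / 4) ^ 2 := by nlinarith [sq_nonneg (a - b)]
  have hratio : (a + n) * (b + n) / ((3 / 2 + n) * (n + 1)) * (n + 3) ≤ n + 1 := by
    rw [div_mul_eq_mul_div, div_le_iff₀ (by positivity)]
    nlinarith [(Nat.cast_nonneg n : (0 : ℝ) ≤ n)]
  have hfactor_nonneg : 0 ≤ (a + n) * (b + n) / ((3 / 2 + n) * (n + 1)) :=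
    div_nonneg (mul_nonneg ha hb) (by positivity)
  rw [hypergeomCoeff_succ (by norm_num), abs_mul, abs_of_nonneg hfactor_nonneg, mul_assoc]
  exact mul_le_mul_of_nonneg_left hratio (abs_nonneg _)

theorem summable_abs_hypergeomCoeff {a b : ℝ} (hab : a + b = 1 / 2) :
    Summable fun n => |hypergeomCoeff a b (3 / 2) n| := by
  obtain ⟨N, hN⟩ := exists_nat_ge (max (-a) (-b))
  refine summable_abs_of_abs_succ_mul_le N fun n hn => abs_hypergeomCoeff_succ_mul_le hab ?_ ?_
  all_goals
    have : (N : ℝ) ≤ n := Nat.cast_le.mpr hn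
    linarith [le_max_left (-a) (-b), le_max_right (-a) (-b)]

theorem abs_twoF1_le_tsum {a b c x : ℝ} (hs : Summable fun n => |hypergeomCoeff a b c n|)
    (hx : |x| ≤ 1) : |twoF1 a b c x| ≤ ∑' n, |hypergeomCoeff a b c n| := by
  have hterm (n : ℕ) : ‖hypergeomCoeff a b c n * x ^ n‖ ≤ |hypergeomCoeff a b c n| := by
    rw [Real.norm_eq_abs, abs_mul, abs_pow]
    exact mul_le_of_le_one_right (abs_nonneg _) (pow_le_one₀ (abs_nonneg _) hx)
  rw [twoF1_eq_tsum, ← Real.norm_eq_abs]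
  exact tsum_of_norm_bounded hs.hasSum hterm

theorem isBoundedUnder_twoF1_sq_nhdsLT_one {a b : ℝ} (hab : a + b = 1 / 2) :
    IsBoundedUnder (· ≤ ·) (𝓝[<] 1) fun x : ℝ => ‖twoF1 a b (3 / 2) (x ^ 2)‖ := by
  refine ⟨∑' n, |hypergeomCoeff a b (3 / 2) n|, eventually_map.mpr ?_⟩
  filter_upwards [Ioo_mem_nhdsLT (show (-1 : ℝ) < 1 by norm_num)] with x hx
  have hx2 : |x ^ 2| ≤ 1 := by
    rw [abs_pow]; exact pow_le_one₀ (abs_nonneg x) (abs_le.mpr ⟨hx.1.le, hx.2.le⟩)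
  exact abs_twoF1_le_tsum (summable_abs_hypergeomCoeff hab) hx2

theorem stmt_8_general (b C : ℝ) (hb : 1 < b) :
    Tendsto
      (fun x : ℝ => C * x * (1 - x^2) ^ ((b-1)/2) * twoF1 ((1-b)/2) (b/2) (3/2) (x^2))
      (nhdsWithin 1 (Iio 1)) (nhds 0)
    ∧ ∀ Cω : ℝ, Cω ≠ 0 →
      ¬ Tendsto
        (fun x : ℝ => C * x * (1 - x^2) ^ ((b-1)/2) * twoF1 ((1-b)/2) (b/2) (3/2) (x^2))
        (nhdsWithin 1 (Iio 1)) (nhds Cω) := by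
  have hp : 0 < (b - 1) / 2 := by linarith
  have hprefactor : Tendsto (fun x : ℝ => C * x * (1 - x ^ 2) ^ ((b - 1) / 2)) (𝓝[<] 1) (𝓝 0) := by
    have hcont : ContinuousAt (fun x : ℝ => C * x * (1 - x ^ 2) ^ ((b - 1) / 2)) 1 := by
      fun_prop (disch := exact Or.inr hp.le)
    simpa [Real.zero_rpow hp.ne'] using hcont.tendsto.mono_left nhdsWithin_le_nhds
  have hlim := hprefactor.zero_mul_isBoundedUnder_le
    (isBoundedUnder_twoF1_sq_nhdsLT_one (show (1 - b) / 2 + b / 2 = 1 / 2 by ring))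
  exact ⟨hlim, fun Cω hCω hCω_lim => hCω (tendsto_nhds_unique hCω_lim hlim)⟩

theorem stmt_8 (b C : ℝ) (hb : 1 < b) (hodd : ∀ k : ℕ, b ≠ 2 * k + 3) (hC : C ≠ 0) :
    Tendsto
      (fun x : ℝ => C * x * (1 - x^2) ^ ((b-1)/2) * twoF1 ((1-b)/2) (b/2) (3/2) (x^2))
      (nhdsWithin 1 (Iio 1)) (nhds 0)
    ∧ ∀ Cω : ℝ, Cω ≠ 0 →
      ¬ Tendsto
        (fun x : ℝ => C * x * (1 - x^2) ^ ((b-1)/2) * twoF1 ((1-b)/2) (b/2) (3/2) (x^2))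
        (nhdsWithin 1 (Iio 1)) (nhds Cω) :=
  stmt_8_general b C hb
end

section
/- The triple Ω(x) = C_ω, F(x) = C₁√(x(1-x)), G(x) = C₁(1-2x)√(1+x)/(2√x) satisfies the inviscid equations for b = 1: F·Ω' = 0, (Ω²)' + (1/2)(1-x²)(F²)''' = 0 on (0,1), and the continuity relation G(x) = √(1-x²)·F'(x) on (0,1). -/
/-! On `(0,1)` the square `F² = C₁² (x - x²)` is a quadratic polynomial, so its third derivative
vanishes, while `Ω` is constant; this gives the two inviscid equations. The continuity relation is
the chain rule for `√(x(1-x))` combined with `√(1-x²) = √(1-x) √(1+x)`. -/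

open Real Set Filter Topology

lemma deriv_linear (a b : ℝ) : deriv (fun y : ℝ => a * y + b) = fun _ => a := by
  funext y
  have h : HasDerivAt (fun y : ℝ => a * y + b) a y := by
    simpa using ((hasDerivAt_id' y).const_mul a).add_const b
  exact h.deriv

lemma deriv_quadratic (a b : ℝ) :
    deriv (fun y : ℝ => a * y ^ 2 + b * y) = fun y => 2 * a * y + b := by
  funext y
  have h : HasDerivAt (fun y : ℝ => a * y ^ 2 + b * y) (2 * a * y + b) y :=
    (((hasDerivAt_pow 2 y).const_mul a).add ((hasDerivAt_id' y).const_mul b)).congr_deriv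
      (by ring)
  exact h.deriv

lemma deriv_deriv_deriv_quadratic (a b : ℝ) :
    deriv (deriv (deriv fun y : ℝ => a * y ^ 2 + b * y)) = 0 := by
  rw [deriv_quadratic, deriv_linear, deriv_const']
  rfl

lemma sq_mul_sqrt_mul_one_sub_eventuallyEq {x : ℝ} (hx : x ∈ Ioo 0 1) (c : ℝ) :
    (fun y => (c * √(y * (1 - y))) ^ 2) =ᶠ[𝓝 x] fun y => -c ^ 2 * y ^ 2 + c ^ 2 * y := by
  filter_upwards [isOpen_Ioo.mem_nhds hx] with y ⟨hy0, hy1⟩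
  rw [mul_pow, sq_sqrt (mul_nonneg hy0.le (sub_nonneg.2 hy1.le))]
  ring

lemma hasDerivAt_sqrt_mul_one_sub {x : ℝ} (hx : x * (1 - x) ≠ 0) :
    HasDerivAt (fun y => √(y * (1 - y))) ((1 - 2 * x) / (2 * √(x * (1 - x)))) x := by
  have h : HasDerivAt (fun y : ℝ => y * (1 - y)) (1 - 2 * x) x :=
    ((hasDerivAt_id' x).mul ((hasDerivAt_id' x).const_sub 1)).congr_deriv (by ring)
  exact h.sqrt hx

lemma sqrt_one_sub_sq_mul_div_sqrt_mul_one_sub {x : ℝ} (hx : x ∈ Ioo 0 1) (a : ℝ) :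
    √(1 - x ^ 2) * (a / (2 * √(x * (1 - x)))) = a * √(1 + x) / (2 * √x) := by
  have hx0 : √x ≠ 0 := (sqrt_pos.2 hx.1).ne'
  have hx1 : √(1 - x) ≠ 0 := (sqrt_pos.2 (sub_pos.2 hx.2)).ne'
  have hfactor : √(1 - x ^ 2) = √(1 - x) * √(1 + x) := by
    rw [← sqrt_mul (sub_pos.2 hx.2).le]
    ring_nf
  rw [hfactor, sqrt_mul hx.1.le]
  field_simp

theorem stmt_10 (Cω C₁ : ℝ) :
    let Ω : ℝ → ℝ := fun _ => Cω
    let F : ℝ → ℝ := fun x => C₁ * Real.sqrt (x * (1 - x))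
    let G : ℝ → ℝ := fun x => C₁ * (1 - 2*x) * Real.sqrt (1 + x) / (2 * Real.sqrt x)
    ∀ x ∈ Ioo (0:ℝ) 1,
      F x * deriv Ω x = 0
      ∧ deriv (fun y => Ω y ^ 2) x
          + (1/2) * (1 - x^2) * deriv (deriv (deriv (fun y => F y ^ 2))) x = 0
      ∧ G x = Real.sqrt (1 - x^2) * deriv F x := by
  intro Ω F G x hx
  refine ⟨by simp [Ω], ?_, ?_⟩
  · rw [(sq_mul_sqrt_mul_one_sub_eventuallyEq hx C₁).deriv.deriv.deriv_eq,
      deriv_deriv_deriv_quadratic]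
    simp [Ω]
  · have hx' : x * (1 - x) ≠ 0 := (mul_pos hx.1 (sub_pos.2 hx.2)).ne'
    rw [((hasDerivAt_sqrt_mul_one_sub hx').const_mul C₁).deriv, mul_left_comm,
      sqrt_one_sub_sq_mul_div_sqrt_mul_one_sub hx]
    simp only [G]
    ring
end

section
/- Let b > 2. There are no nontrivial classical solutions: if f, ω are continuous on (0,1), ω(x) = Ω(x)(1-x²)^{(1-b)/2} with Ω(x) → C_ω ≠ 0 as x → 1⁻, f(1⁻) = 0, and on any interval where f ≠ 0 we have ω = c|f|^{(1-b)/(2-b)} with c > 0, and on any interval where f ≡ 0 we have Ω constant, then f ≡ 0 on (0,1). -/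
/-!
Away from the zeros of `f`, the relation `ω = c |f| ^ ((1-b)/(2-b))` has a positive exponent, so `ω`
vanishes at the first zero of `f` to the right of a point where `f ≠ 0`; hence so does
`Ω = ω (1 - x²) ^ ((b-1)/2)`. Near `1` we have `Ω ≈ Cω ≠ 0`, so `f` can neither be nonzero near `1`
(then `ω → 0` and `Ω → 0`) nor have a nonzero value followed by a zero there: `f ≡ 0` near `1`.
If `Ω` had a zero in `(0,1)`, at its last zero `w` we would get `f ≡ 0` on `(w,1)`, so `Ω` is
constant there, equal to `Cω` by the limit at `1` and to `Ω w = 0` by continuity at `w`.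
-/

open Real Set Filter Topology

lemma exists_first_zero {f : ℝ → ℝ} {y z : ℝ} (hyz : y ≤ z) (hf : ContinuousOn f (Icc y z))
    (hy : f y ≠ 0) (hz : f z = 0) : ∃ v ∈ Ioc y z, f v = 0 ∧ ∀ x ∈ Ioo y v, f x ≠ 0 := by
  set Z := Icc y z ∩ f ⁻¹' {0}
  have hZ : IsClosed Z := hf.preimage_isClosed_of_isClosed isClosed_Icc isClosed_singleton
  have hbdd : BddBelow Z := bddBelow_Icc.mono inter_subset_left
  obtain ⟨⟨hyv, hvz⟩, hv⟩ : sInf Z ∈ Z := hZ.csInf_mem ⟨z, ⟨hyz, le_rfl⟩, hz⟩ hbdd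
  refine ⟨sInf Z, ⟨hyv.lt_of_ne fun h => hy (h ▸ hv), hvz⟩, hv, fun x hx hfx => ?_⟩
  exact hx.2.not_ge (csInf_le hbdd ⟨⟨hx.1.le, hx.2.le.trans hvz⟩, hfx⟩)

lemma exists_last_zero {f : ℝ → ℝ} {y z : ℝ} (hyz : y ≤ z) (hf : ContinuousOn f (Icc y z))
    (hy : f y = 0) (hz : f z ≠ 0) : ∃ w ∈ Ico y z, f w = 0 ∧ ∀ x ∈ Ioo w z, f x ≠ 0 := by
  set Z := Icc y z ∩ f ⁻¹' {0}
  have hZ : IsClosed Z := hf.preimage_isClosed_of_isClosed isClosed_Icc isClosed_singleton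
  have hbdd : BddAbove Z := bddAbove_Icc.mono inter_subset_left
  obtain ⟨⟨hyw, hwz⟩, hw⟩ : sSup Z ∈ Z := hZ.csSup_mem ⟨y, ⟨le_rfl, hyz⟩, hy⟩ hbdd
  refine ⟨sSup Z, ⟨hyw, hwz.lt_of_ne fun h => hz (h ▸ hw)⟩, hw, fun x hx hfx => ?_⟩
  exact hx.1.not_ge (le_csSup hbdd ⟨⟨hyw.trans hx.1.le, hx.2.le⟩, hfx⟩)

lemma Filter.Tendsto.const_mul_abs_rpow_zero {α : Type*} {l : Filter α} {g : α → ℝ}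
    (hg : Tendsto g l (𝓝 0)) (c : ℝ) {p : ℝ} (hp : 0 < p) :
    Tendsto (fun x => c * |g x| ^ p) l (𝓝 0) := by
  have h := (hg.abs.rpow_const (Or.inr hp.le)).const_mul c
  simpa [zero_rpow hp.ne'] using h

lemma eq_zero_of_eqOn_const_mul_abs_rpow {f ω : ℝ → ℝ} {y v c p : ℝ} (hyv : y < v) (hp : 0 < p)
    (hf : ContinuousAt f v) (hfv : f v = 0) (hω : ContinuousAt ω v)
    (h : ∀ x ∈ Ioo y v, ω x = c * |f x| ^ p) : ω v = 0 := by
  have hf' : Tendsto f (𝓝[<] v) (𝓝 0) := by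
    rw [← hfv]
    exact hf.tendsto.mono_left nhdsWithin_le_nhds
  refine tendsto_nhds_unique (l := 𝓝[<] v) (hω.tendsto.mono_left nhdsWithin_le_nhds) ?_
  refine (hf'.const_mul_abs_rpow_zero c hp).congr' ?_
  filter_upwards [Ioo_mem_nhdsLT hyv] with x hx using (h x hx).symm

structure IsClassicalSolution (b Cω : ℝ) (f ω Ω : ℝ → ℝ) : Prop where
  continuousOn_f : ContinuousOn f (Ioo 0 1)
  continuousOn_ω : ContinuousOn ω (Ioo 0 1)
  ω_eq : ∀ x ∈ Ioo (0:ℝ) 1, ω x = Ω x * (1 - x ^ 2) ^ ((1 - b) / 2)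
  tendsto_Ω : Tendsto Ω (𝓝[<] 1) (𝓝 Cω)
  tendsto_f : Tendsto f (𝓝[<] 1) (𝓝 0)
  eq_const_mul_abs_rpow : ∀ s t : ℝ, Ioo s t ⊆ Ioo (0:ℝ) 1 → (∀ x ∈ Ioo s t, f x ≠ 0) →
    ∃ c > (0:ℝ), ∀ x ∈ Ioo s t, ω x = c * |f x| ^ ((1 - b) / (2 - b))
  Ω_const : ∀ s t : ℝ, Ioo s t ⊆ Ioo (0:ℝ) 1 → (∀ x ∈ Ioo s t, f x = 0) →
    ∃ C : ℝ, ∀ x ∈ Ioo s t, Ω x = C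

namespace IsClassicalSolution

variable {b Cω : ℝ} {f ω Ω : ℝ → ℝ}

lemma Ω_eq (h : IsClassicalSolution b Cω f ω Ω) :
    ∀ x ∈ Ioo (0:ℝ) 1, Ω x = ω x * (1 - x ^ 2) ^ ((b - 1) / 2) := by
  intro x hx
  have hpos : 0 < 1 - x ^ 2 := by nlinarith [hx.1, hx.2]
  rw [h.ω_eq x hx, mul_assoc, ← rpow_add hpos, show (1 - b) / 2 + (b - 1) / 2 = 0 by ring,
    rpow_zero, mul_one]

lemma continuousOn_Ω (h : IsClassicalSolution b Cω f ω Ω) : ContinuousOn Ω (Ioo 0 1) := by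
  have hbase : ContinuousOn (fun x : ℝ => 1 - x ^ 2) (Ioo 0 1) := by fun_prop
  refine (h.continuousOn_ω.mul (hbase.rpow_const ?_)).congr h.Ω_eq
  intro x hx
  exact Or.inl (by nlinarith [hx.1, hx.2])

lemma exists_Ω_eq_zero (h : IsClassicalSolution b Cω f ω Ω) (hb : 2 < b) {y z : ℝ}
    (hy : y ∈ Ioo (0:ℝ) 1) (hyz : y ≤ z) (hz : z < 1) (hfy : f y ≠ 0) (hfz : f z = 0) :
    ∃ v ∈ Ioc y z, Ω v = 0 := by
  have hsub : Icc y z ⊆ Ioo 0 1 := Icc_subset_Ioo hy.1 hz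
  obtain ⟨v, hv, hfv, hne⟩ := exists_first_zero hyz (h.continuousOn_f.mono hsub) hfy hfz
  have hv01 : v ∈ Ioo (0:ℝ) 1 := hsub (Ioc_subset_Icc_self hv)
  obtain ⟨c, -, hc⟩ := h.eq_const_mul_abs_rpow y v (Ioo_subset_Ioo hy.1.le hv01.2.le) hne
  have hp : 0 < (1 - b) / (2 - b) := div_pos_of_neg_of_neg (by linarith) (by linarith)
  have hωv : ω v = 0 :=
    eq_zero_of_eqOn_const_mul_abs_rpow hv.1 hp
      (h.continuousOn_f.continuousAt (isOpen_Ioo.mem_nhds hv01)) hfv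
      (h.continuousOn_ω.continuousAt (isOpen_Ioo.mem_nhds hv01)) hc
  exact ⟨v, hv, by rw [h.Ω_eq v hv01, hωv, zero_mul]⟩

lemma exists_zero_near_one (h : IsClassicalSolution b Cω f ω Ω) (hb : 2 < b) (hCω : Cω ≠ 0)
    {y : ℝ} (hy : y ∈ Ioo (0:ℝ) 1) : ∃ z ∈ Ioo y 1, f z = 0 := by
  by_contra! hne
  obtain ⟨c, -, hc⟩ := h.eq_const_mul_abs_rpow y 1 (Ioo_subset_Ioo_left hy.1.le) hne
  have hp : 0 < (1 - b) / (2 - b) := div_pos_of_neg_of_neg (by linarith) (by linarith)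
  have hω : Tendsto ω (𝓝[<] 1) (𝓝 0) := by
    refine (h.tendsto_f.const_mul_abs_rpow_zero c hp).congr' ?_
    filter_upwards [Ioo_mem_nhdsLT hy.2] with x hx using (hc x hx).symm
  have hweight : Tendsto (fun x : ℝ => (1 - x ^ 2) ^ ((b - 1) / 2)) (𝓝[<] 1) (𝓝 0) := by
    have hbase : Tendsto (fun x : ℝ => 1 - x ^ 2) (𝓝 1) (𝓝 0) := by
      have : Continuous (fun x : ℝ => 1 - x ^ 2) := by fun_prop
      simpa using this.tendsto 1
    have hq : 0 < (b - 1) / 2 := by linarith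
    simpa [zero_rpow hq.ne'] using
      (hbase.mono_left nhdsWithin_le_nhds).rpow_const (Or.inr hq.le)
  have hΩ : Tendsto Ω (𝓝[<] 1) (𝓝 0) := by
    have hprod := hω.mul hweight
    rw [zero_mul] at hprod
    refine hprod.congr' ?_
    filter_upwards [Ioo_mem_nhdsLT zero_lt_one] with x hx using (h.Ω_eq x hx).symm
  exact hCω (tendsto_nhds_unique h.tendsto_Ω hΩ)

lemma eqOn_zero_of_Ω_ne_zero (h : IsClassicalSolution b Cω f ω Ω) (hb : 2 < b) (hCω : Cω ≠ 0)
    {a : ℝ} (ha : 0 ≤ a) (hΩ : ∀ x ∈ Ioo a 1, Ω x ≠ 0) : ∀ x ∈ Ioo a 1, f x = 0 := by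
  intro y hy
  by_contra hfy
  have hy01 : y ∈ Ioo (0:ℝ) 1 := ⟨ha.trans_lt hy.1, hy.2⟩
  obtain ⟨z, hz, hfz⟩ := h.exists_zero_near_one hb hCω hy01
  obtain ⟨v, hv, hΩv⟩ := h.exists_Ω_eq_zero hb hy01 hz.1.le hz.2 hfy hfz
  exact hΩ v ⟨hy.1.trans hv.1, hv.2.trans_lt hz.2⟩ hΩv

lemma Ω_eq_of_Ω_ne_zero (h : IsClassicalSolution b Cω f ω Ω) (hb : 2 < b) (hCω : Cω ≠ 0)
    {a : ℝ} (ha : a ∈ Ioo (0:ℝ) 1) (hΩ : ∀ x ∈ Ioo a 1, Ω x ≠ 0) : Ω a = Cω := by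
  obtain ⟨C, hC⟩ := h.Ω_const a 1 (Ioo_subset_Ioo_left ha.1.le)
    (h.eqOn_zero_of_Ω_ne_zero hb hCω ha.1.le hΩ)
  have hright : Tendsto Ω (𝓝[>] a) (𝓝 C) := tendsto_const_nhds.congr' <| by
    filter_upwards [Ioo_mem_nhdsGT ha.2] with x hx using (hC x hx).symm
  have hleft : Tendsto Ω (𝓝[<] 1) (𝓝 C) := tendsto_const_nhds.congr' <| by
    filter_upwards [Ioo_mem_nhdsLT ha.2] with x hx using (hC x hx).symm
  have hΩa := (h.continuousOn_Ω.continuousAt (isOpen_Ioo.mem_nhds ha)).tendsto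
  rw [tendsto_nhds_unique (hΩa.mono_left nhdsWithin_le_nhds) hright,
    tendsto_nhds_unique hleft h.tendsto_Ω]

lemma Ω_ne_zero (h : IsClassicalSolution b Cω f ω Ω) (hb : 2 < b) (hCω : Cω ≠ 0) :
    ∀ x ∈ Ioo (0:ℝ) 1, Ω x ≠ 0 := by
  intro v hv hΩv
  obtain ⟨a, ha1, ha⟩ := mem_nhdsLT_iff_exists_Ioo_subset.mp (h.tendsto_Ω.eventually_ne hCω)
  obtain ⟨z, hvz, hz1⟩ := exists_between (max_lt ha1 hv.2)
  have haz : a < z := (le_max_left a v).trans_lt hvz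
  obtain ⟨w, hw, hΩw, hne⟩ := exists_last_zero ((le_max_right a v).trans hvz.le)
    (h.continuousOn_Ω.mono (Icc_subset_Ioo hv.1 hz1)) hΩv (ha ⟨haz, hz1⟩)
  have hne' : ∀ x ∈ Ioo w 1, Ω x ≠ 0 := by
    intro x hx
    rcases lt_or_ge x z with hxz | hzx
    · exact hne x ⟨hx.1, hxz⟩
    · exact ha ⟨haz.trans_le hzx, hx.2⟩
  have hΩw' := h.Ω_eq_of_Ω_ne_zero hb hCω ⟨hv.1.trans_le hw.1, hw.2.trans hz1⟩ hne'
  exact hCω (by rw [← hΩw', hΩw])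

end IsClassicalSolution

theorem stmt_13 (b Cω : ℝ) (hb : 2 < b) (hCω : Cω ≠ 0) (f ω Ω : ℝ → ℝ)
    (hfc : ContinuousOn f (Ioo 0 1)) (hωc : ContinuousOn ω (Ioo 0 1))
    (hωΩ : ∀ x ∈ Ioo (0:ℝ) 1, ω x = Ω x * (1 - x^2) ^ ((1-b)/2))
    (hΩlim : Tendsto Ω (nhdsWithin 1 (Iio 1)) (nhds Cω))
    (hflim : Tendsto f (nhdsWithin 1 (Iio 1)) (nhds 0))
    (hpow : ∀ s t : ℝ, Ioo s t ⊆ Ioo (0:ℝ) 1 → (∀ x ∈ Ioo s t, f x ≠ 0) →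
      ∃ c > (0:ℝ), ∀ x ∈ Ioo s t, ω x = c * |f x| ^ ((1-b)/(2-b)))
    (hconst : ∀ s t : ℝ, Ioo s t ⊆ Ioo (0:ℝ) 1 → (∀ x ∈ Ioo s t, f x = 0) →
      ∃ C : ℝ, ∀ x ∈ Ioo s t, Ω x = C) :
    ∀ x ∈ Ioo (0:ℝ) 1, f x = 0 := by
  have h : IsClassicalSolution b Cω f ω Ω := ⟨hfc, hωc, hωΩ, hΩlim, hflim, hpow, hconst⟩
  exact h.eqOn_zero_of_Ω_ne_zero hb hCω le_rfl (h.Ω_ne_zero hb hCω)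
end

section
/- Let 1 < b < 2. If f is differentiable on (0,1), f > 0 on (0,1), lim_{x→1⁻} f(x) = 0, and (2-b)f(x) - x·f'(x) ≤ 0 on (0,1), then a contradiction follows; i.e., no such f exists. -/
open Real Set Filter

theorem stmt_14 (b : ℝ) (hb1 : 1 < b) (hb2 : b < 2) (f : ℝ → ℝ)
    (hfd : ∀ x ∈ Ioo (0:ℝ) 1, DifferentiableAt ℝ f x)
    (hfpos : ∀ x ∈ Ioo (0:ℝ) 1, 0 < f x)
    (hflim : Tendsto f (nhdsWithin 1 (Iio 1)) (nhds 0))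
    (hineq : ∀ x ∈ Ioo (0:ℝ) 1, (2 - b) * f x - x * deriv f x ≤ 0) :
    False := by
  have hmono : StrictMonoOn f (Ioo (0:ℝ) 1) := by
    apply strictMonoOn_of_deriv_pos (convex_Ioo 0 1)
    · exact fun x hx => (hfd x hx).continuousAt.continuousWithinAt
    · intro x hx
      rw [interior_Ioo] at hx
      have h1 := hineq x hx
      have h2 := hfpos x hx
      have hx0 := hx.1
      have h3 : 0 < x * deriv f x := by nlinarith
      by_contra h
      push_neg at h
      nlinarith
  have h34 : (3/4 : ℝ) ∈ Ioo (0:ℝ) 1 := by norm_num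
  have hc : 0 < f (3/4) := hfpos _ h34
  have hev : ∀ᶠ x in nhdsWithin 1 (Iio (1:ℝ)), f x < f (3/4) :=
    hflim.eventually (Filter.Tendsto.eventually_lt_const hc tendsto_id)
  have hmem : Ioo (3/4 : ℝ) 1 ∈ nhdsWithin 1 (Iio (1:ℝ)) := by
    rw [mem_nhdsWithin]
    exact ⟨Ioi (3/4 : ℝ), isOpen_Ioi, by norm_num, fun x hx => ⟨hx.1, hx.2⟩⟩
  obtain ⟨x, hx1, hx2⟩ := (hev.and (eventually_of_mem hmem fun x hx => hx)).exists
  have hxI : x ∈ Ioo (0:ℝ) 1 := ⟨by linarith [hx2.1], hx2.2⟩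
  have := hmono h34 hxI hx2.1
  linarith
end
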